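/- Let Ω be a finite probability space, C a finite color set, H : Ω → C, ≈ an equivalence relation on Ω whose classes determine the conditional color densities d(c | e) := P[H(e')=c | e' ≈ e], and δ : Ω → [0,∞) with E[δ] ≤ ε/|C|. Define an element e to be ordinary if d(H(e) | e) ≥ ε^{1/3}/|C| and δ(e) ≤ ε^{2/3}/|C|. Then P[e is not ordinary] ≤ 2ε^{1/3}. -/

import Mathlib

open scoped Classical

/-!
Split the non-ordinary elements into those of low colour density and those of large `δ`.
The second set has mass at most `ε^(1/3)` by Markov's inequality, since
`ε^(2/3)/|C| · ε^(1/3) = ε/|C|`. For the first, cut `Ω` into the fibres of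
`e ↦ (class of e, H e)`: the density `d(H e ∣ e)` is the mass of the fibre of `e` divided by the
mass of its class, so a fibre of density below `α = ε^(1/3)/|C|` has mass below `α` times the
mass of its class. Summing over the `|C|` colours and then over the classes bounds the
low-density mass by `α |C| = ε^(1/3)`.
-/

open Finset

namespace Finset

variable {ι : Type*} {s : Finset ι} {w : ι → ℝ}

theorem sum_filter_not_and_le (hw : ∀ i ∈ s, 0 ≤ w i) (p q : ι → Prop) [DecidablePred p]
    [DecidablePred q] :
    ∑ i ∈ s with ¬(p i ∧ q i), w i ≤ ∑ i ∈ s with ¬p i, w i + ∑ i ∈ s with ¬q i, w i := by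
  rw [sum_filter, sum_filter, sum_filter, ← sum_add_distrib]
  refine sum_le_sum fun i hi => ?_
  have := hw i hi
  split_ifs <;> simp_all

theorem mul_sum_filter_not_le_le_sum_mul (hw : ∀ i ∈ s, 0 ≤ w i) {f : ι → ℝ}
    (hf : ∀ i ∈ s, 0 ≤ f i) (t : ℝ) :
    t * ∑ i ∈ s with ¬f i ≤ t, w i ≤ ∑ i ∈ s, w i * f i :=
  calc t * ∑ i ∈ s with ¬f i ≤ t, w i
      ≤ ∑ i ∈ s with ¬f i ≤ t, w i * f i := by
        rw [mul_sum]
        refine sum_le_sum fun i hi => ?_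
        rw [mem_filter, not_le] at hi
        rw [mul_comm]
        exact mul_le_mul_of_nonneg_left hi.2.le (hw i hi.1)
    _ ≤ ∑ i ∈ s, w i * f i :=
        sum_le_sum_of_subset_of_nonneg (filter_subset _ _)
          fun i hi _ => mul_nonneg (hw i hi) (hf i hi)

end Finset

section ColorDensity

variable {Ω C K : Type*} [Fintype Ω]

/-- The paper's `d(H e ∣ e)`. -/
noncomputable def colorDensity (w : Ω → ℝ) (R : Ω → Ω → Prop) (H : Ω → C) (e : Ω) : ℝ :=
  (∑ e' with H e' = H e ∧ R e' e, w e') / ∑ e' with R e' e, w e'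

theorem sum_filter_colorDensity_lt_le_of_kernel [Fintype C] {w : Ω → ℝ} (hw : ∀ x, 0 ≤ w x)
    (κ : Ω → K) (H : Ω → C) {α : ℝ} (hα : 0 ≤ α) :
    ∑ e with colorDensity w (fun a b => κ a = κ b) H e < α, w e
      ≤ α * Fintype.card C * ∑ e, w e := by
  set d := colorDensity w (fun a b => κ a = κ b) H
  set W : K → ℝ := fun k => ∑ e with κ e = k, w e
  set V : K → C → ℝ := fun k c => ∑ e with κ e = k ∧ H e = c, w e
  have hd : ∀ e, d e = V (κ e) (H e) / W (κ e) := by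
    intro e
    simp only [d, V, W, colorDensity, and_comm, eq_comm]
  have hfiber : ∀ k c, ∑ e with (d e < α ∧ κ e = k) ∧ H e = c, w e ≤ α * W k := by
    intro k c
    rcases (univ.filter fun e => (d e < α ∧ κ e = k) ∧ H e = c).eq_empty_or_nonempty
      with hempty | ⟨e, he⟩
    · rw [hempty, sum_empty]
      exact mul_nonneg hα (sum_nonneg fun i _ => hw i)
    simp only [mem_filter, mem_univ, true_and] at he
    obtain ⟨⟨hlt, rfl⟩, rfl⟩ := he
    have hVW : V (κ e) (H e) ≤ W (κ e) :=
      sum_le_sum_of_subset_of_nonneg (monotone_filter_right _ fun _ _ h => h.1)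
        fun i _ _ => hw i
    calc ∑ e' with (d e' < α ∧ κ e' = κ e) ∧ H e' = H e, w e'
        ≤ V (κ e) (H e) :=
          sum_le_sum_of_subset_of_nonneg (monotone_filter_right _ fun _ _ h => ⟨h.1.2, h.2⟩)
            fun i _ _ => hw i
      _ ≤ α * W (κ e) := by
          have hW : 0 ≤ W (κ e) := sum_nonneg fun i _ => hw i
          rcases hW.eq_or_lt with h0 | hpos
          · rw [← h0] at hVW ⊢
            simpa using hVW
          · rw [hd, div_lt_iff₀ hpos] at hlt
            exact hlt.le
  calc ∑ e with d e < α, w e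
      = ∑ k ∈ univ.image κ, ∑ c, ∑ e with (d e < α ∧ κ e = k) ∧ H e = c, w e := by
        rw [← sum_fiberwise_of_maps_to fun e _ => mem_image_of_mem κ (mem_univ e)]
        refine sum_congr rfl fun k _ => ?_
        rw [← sum_fiberwise _ H]
        simp only [filter_filter]
    _ ≤ ∑ k ∈ univ.image κ, ∑ _c : C, α * W k := by
        gcongr with k _ c
        exact hfiber k c
    _ = α * Fintype.card C * ∑ e, w e := by
        simp only [sum_const, card_univ, nsmul_eq_mul, W, ← mul_sum]
        rw [sum_fiberwise_of_maps_to fun e _ => mem_image_of_mem κ (mem_univ e)]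
        ring

theorem colorDensity_quotient_mk {R : Ω → Ω → Prop} (hR : Equivalence R) (w : Ω → ℝ)
    (H : Ω → C) :
    colorDensity w (fun a b => Quotient.mk ⟨R, hR⟩ a = Quotient.mk _ b) H =
      colorDensity w R H := by
  funext e
  simp only [colorDensity, Quotient.eq]

theorem sum_filter_colorDensity_lt_le [Fintype C] {w : Ω → ℝ} (hw : ∀ x, 0 ≤ w x)
    {R : Ω → Ω → Prop} (hR : Equivalence R) (H : Ω → C) {α : ℝ} (hα : 0 ≤ α) :
    ∑ e with colorDensity w R H e < α, w e ≤ α * Fintype.card C * ∑ e, w e := by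
  rw [← colorDensity_quotient_mk hR]
  exact sum_filter_colorDensity_lt_le_of_kernel hw _ H hα

end ColorDensity

theorem stmt6_general {Ω C : Type*} [Fintype Ω] [Fintype C]
    (w : Ω → ℝ) (hw : ∀ x, 0 ≤ w x) (hw1 : ∑ x, w x = 1)
    (H : Ω → C) (R : Ω → Ω → Prop) (hR : Equivalence R)
    (δ : Ω → ℝ) (hδ : ∀ x, 0 ≤ δ x)
    (ε : ℝ) (hε : 0 < ε)
    (hE : ∑ x, w x * δ x ≤ ε / (Fintype.card C)) :
    ∑ e ∈ Finset.univ.filter (fun e : Ω => ¬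
        (Real.rpow ε (1/3) / (Fintype.card C) ≤
            (∑ e' ∈ Finset.univ.filter (fun e' => H e' = H e ∧ R e' e), w e') /
              (∑ e' ∈ Finset.univ.filter (fun e' => R e' e), w e')
          ∧ δ e ≤ Real.rpow ε (2/3) / (Fintype.card C))),
      w e ≤ 2 * Real.rpow ε (1/3) := by
  obtain ⟨x, -⟩ := nonempty_of_sum_ne_zero (hw1.trans_ne one_ne_zero)
  have : Nonempty C := ⟨H x⟩
  have hC : (0 : ℝ) < Fintype.card C := Nat.cast_pos.2 Fintype.card_pos
  simp only [Real.rpow_eq_pow]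
  have hdensity : ∑ e with ¬ε ^ (1 / 3 : ℝ) / Fintype.card C ≤ colorDensity w R H e, w e
      ≤ ε ^ (1 / 3 : ℝ) := by
    simp only [not_le]
    refine (sum_filter_colorDensity_lt_le hw hR H (by positivity)).trans_eq ?_
    rw [hw1]
    field_simp
  have hmarkov : ∑ e with ¬δ e ≤ ε ^ (2 / 3 : ℝ) / Fintype.card C, w e ≤ ε ^ (1 / 3 : ℝ) := by
    refine le_of_mul_le_mul_left ?_ (by positivity : 0 < ε ^ (2 / 3 : ℝ) / Fintype.card C)
    calc _ ≤ ∑ x, w x * δ x :=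
          mul_sum_filter_not_le_le_sum_mul (fun i _ => hw i) (fun i _ => hδ i) _
      _ ≤ ε / Fintype.card C := hE
      _ = ε ^ (2 / 3 : ℝ) / Fintype.card C * ε ^ (1 / 3 : ℝ) := by
        rw [div_mul_eq_mul_div, ← Real.rpow_add hε]
        norm_num
  calc _ ≤ _ := sum_filter_not_and_le (fun i _ => hw i) _ _
    _ ≤ ε ^ (1 / 3 : ℝ) + ε ^ (1 / 3 : ℝ) := add_le_add hdensity hmarkov
    _ = 2 * ε ^ (1 / 3 : ℝ) := by ring

/-- Combining the color-density bound and Markov's inequality: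
call `e` ordinary when `d(H e ∣ e) ≥ ε^(1/3)/|C|` and `δ e ≤ ε^(2/3)/|C|`; then the
probability that a random `e` is not ordinary is at most `2·ε^(1/3)`. -/
theorem stmt6 {Ω C : Type*} [Fintype Ω] [Fintype C] [Nonempty C]
    (w : Ω → ℝ) (hw : ∀ x, 0 ≤ w x) (hw1 : ∑ x, w x = 1)
    (H : Ω → C) (R : Ω → Ω → Prop) (hR : Equivalence R)
    (δ : Ω → ℝ) (hδ : ∀ x, 0 ≤ δ x)
    (hfib : ∀ x y, R x y → H x = H y → δ x = δ y)
    (ε : ℝ) (hε : 0 < ε)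
    (hE : ∑ x, w x * δ x ≤ ε / (Fintype.card C)) :
    ∑ e ∈ Finset.univ.filter (fun e : Ω => ¬
        (Real.rpow ε (1/3) / (Fintype.card C) ≤
            (∑ e' ∈ Finset.univ.filter (fun e' => H e' = H e ∧ R e' e), w e') /
              (∑ e' ∈ Finset.univ.filter (fun e' => R e' e), w e')
          ∧ δ e ≤ Real.rpow ε (2/3) / (Fintype.card C))),
      w e ≤ 2 * Real.rpow ε (1/3) :=
  stmt6_general w hw hw1 H R hR δ hδ ε hε hE
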